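/- Let f, l : [a,b] → ℝ with a < b, where f satisfies m ≤ f(x) ≤ M for almost every x ∈ [a,b] (with m, M real constants), l is integrable on [a,b], and ∫_a^b l(x) dx = 0. Then |∫_a^b f(x) l(x) dx| ≤ (1/2)(M − m) ∫_a^b |l(x)| dx. -/
import Mathlib


open MeasureTheory Set

theorem median_principle_zero_integral
    (a b m M : ℝ) (f l : ℝ → ℝ) (hab : a < b)
    (hfmeas : Measurable f)
    (hbound : ∀ᵐ x ∂volume, x ∈ Icc a b → m ≤ f x ∧ f x ≤ M)
    (hl : IntervalIntegrable l volume a b)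
    (hl0 : ∫ x in a..b, l x = 0) :
    |∫ x in a..b, f x * l x| ≤ (1 / 2) * (M - m) * ∫ x in a..b, |l x| := by
  set c : ℝ := (m + M) / 2 with hc
  have hab' : a ≤ b := hab.le
  -- bound on Ioc a b a.e.
  have hIoc : Ioc a b ⊆ Icc a b := Ioc_subset_Icc_self
  have hbound' : ∀ᵐ x ∂(volume.restrict (Ioc a b)), |f x - c| ≤ (M - m) / 2 := by
    have h1 : ∀ᵐ x ∂(volume.restrict (Ioc a b)), x ∈ Ioc a b :=
      ae_restrict_mem measurableSet_Ioc
    have h2 : ∀ᵐ x ∂(volume.restrict (Ioc a b)), x ∈ Icc a b → m ≤ f x ∧ f x ≤ M :=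
      ae_restrict_of_ae hbound
    filter_upwards [h1, h2] with x hx h
    obtain ⟨h₁, h₂⟩ := h (hIoc hx)
    rw [abs_le]
    constructor <;> simp only [hc] <;> linarith
  -- integrability of (f - c) * l and f * l on Ioc
  have hlint : IntegrableOn l (Ioc a b) volume := hl.1
  have hfc : IntegrableOn (fun x => (f x - c) * l x) (Ioc a b) volume := by
    apply Integrable.bdd_mul hlint ((hfmeas.sub measurable_const).aestronglyMeasurable) 
    filter_upwards [hbound'] with x hx using by simpa [Real.norm_eq_abs] using hx
  have hfl : IntegrableOn (fun x => f x * l x) (Ioc a b) volume := by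
    have : (fun x => f x * l x) = fun x => (f x - c) * l x + c * l x := by
      ext x; ring
    rw [this]
    exact hfc.add (hlint.const_mul c)
  have hfcI : IntervalIntegrable (fun x => (f x - c) * l x) volume a b :=
    (intervalIntegrable_iff_integrableOn_Ioc_of_le hab').2 hfc
  have hflI : IntervalIntegrable (fun x => f x * l x) volume a b :=
    (intervalIntegrable_iff_integrableOn_Ioc_of_le hab').2 hfl
  -- subtract constant
  have key : ∫ x in a..b, f x * l x = ∫ x in a..b, (f x - c) * l x := by
    have : ∫ x in a..b, (f x - c) * l x
        = (∫ x in a..b, f x * l x) - c * ∫ x in a..b, l x := by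
      rw [← intervalIntegral.integral_const_mul, ← intervalIntegral.integral_sub hflI
        ((hl.const_mul c))]
      congr 1; ext x; ring
    rw [this, hl0]; ring
  rw [key]
  have habs : |∫ x in a..b, (f x - c) * l x| ≤ ∫ x in a..b, |(f x - c) * l x| :=
    intervalIntegral.abs_integral_le_integral_abs hab'
  refine habs.trans ?_
  rw [intervalIntegral.integral_of_le hab', intervalIntegral.integral_of_le hab',
    ← MeasureTheory.integral_const_mul]
  apply integral_mono_ae hfc.abs
  · exact (hlint.abs.const_mul _)
  · filter_upwards [hbound'] with x hx
    rw [abs_mul]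
    have : (1:ℝ)/2 * (M - m) = (M - m)/2 := by ring
    rw [this]
    exact mul_le_mul_of_nonneg_right hx (abs_nonneg _)
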